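/- Define φ₁(x) = ∫_{S^{n-1}} e^{x·ω} dω for x ∈ ℝⁿ, n ≥ 2. Then there is a constant C > 0 such that 0 < φ₁(x) ≤ C e^{|x|} (1+|x|)^{-(n-1)/2} for all x ∈ ℝⁿ. -/

import Mathlib

/-!
The integrand is positive, and `φ₁(x) ≤ e^{|x|} σ(S^{n-1})` since `|x·ω| ≤ |x|`; this settles
positivity and the case `|x| ≤ 1`.
For `|x| ≥ 1` put `u = x/|x|` and sort the directions `ω` into layers
`k ≤ |x| - x·ω < k + 1`. On the `k`-th layer `e^{x·ω} ≤ e^{|x| - k}`, and the layer lies in the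
cap `u·ω > 1 - (k+1)/|x|`. A cap of depth `t` has measure `O(t^{(n-1)/2})`: in an orthonormal
basis starting with `u`, the cone over it lies in the box `[-1,1] × [-√(2t), √(2t)]^{n-1}`.
Hence `φ₁(x) ≲ e^{|x|} |x|^{-(n-1)/2} ∑ₖ (k+1)^n e^{-k}`.
-/

open Real MeasureTheory RealInnerProductSpace

/-- The function `φ₁(x) = ∫_{S^{n-1}} e^{x·ω} dω`, integrating over the unit
sphere in `ℝⁿ` with its surface measure. -/
noncomputable def phi1 (n : ℕ) (x : EuclideanSpace ℝ (Fin n)) : ℝ :=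
  ∫ ω : Metric.sphere (0 : EuclideanSpace ℝ (Fin n)) 1,
    Real.exp ⟪x, (ω : EuclideanSpace ℝ (Fin n))⟫ ∂((volume : Measure (EuclideanSpace ℝ (Fin n))).toSphere)

open Metric Set Module
open scoped ENNReal Pointwise

theorem summable_add_one_pow_mul_exp_neg (d : ℕ) :
    Summable fun k : ℕ => ((k : ℝ) + 1) ^ d * exp (-k) := by
  have h := ((summable_nat_add_iff 1).2 (summable_pow_mul_exp_neg_nat_mul d one_pos)).mul_left
    (exp 1)
  refine h.congr fun k => ?_
  push_cast
  rw [mul_left_comm, ← exp_add]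
  ring_nf

theorem exp_sub_mul_rpow_le {r p : ℝ} (hr : 1 ≤ r) (hp : 0 ≤ p) {d : ℕ} (hpd : p ≤ d) (k : ℕ) :
    exp (r - k) * (2 * ((k + 1) / r)) ^ p ≤
      4 ^ p * exp r * (1 + r) ^ (-p) * (((k : ℝ) + 1) ^ d * exp (-k)) := by
  have hk : (1 : ℝ) ≤ k + 1 := by linarith [k.cast_nonneg (α := ℝ)]
  have hbase : 2 * ((k + 1) / r) ≤ 4 * (k + 1) / (1 + r) := by
    rw [mul_div_assoc', div_le_div_iff₀ (by linarith) (by linarith)]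
    nlinarith
  have hpow : (2 * ((k + 1) / r)) ^ p ≤ 4 ^ p * ((k : ℝ) + 1) ^ d * (1 + r) ^ (-p) :=
    calc (2 * ((k + 1) / r)) ^ p ≤ (4 * (k + 1) / (1 + r)) ^ p := by gcongr
      _ = 4 ^ p * ((k : ℝ) + 1) ^ p * (1 + r) ^ (-p) := by
        rw [div_rpow (by positivity) (by positivity), mul_rpow (by positivity) (by positivity),
          rpow_neg (by positivity), div_eq_mul_inv]
      _ ≤ 4 ^ p * ((k : ℝ) + 1) ^ d * (1 + r) ^ (-p) := by
        gcongr
        exact_mod_cast rpow_le_rpow_of_exponent_le hk hpd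
  calc exp (r - k) * (2 * ((k + 1) / r)) ^ p
      ≤ exp (r - k) * (4 ^ p * ((k : ℝ) + 1) ^ d * (1 + r) ^ (-p)) := by gcongr
    _ = _ := by
      rw [sub_eq_add_neg, exp_add]
      ring

section

variable {E : Type*} [NormedAddCommGroup E] [InnerProductSpace ℝ E]

def sphereCap (u : E) (t : ℝ) : Set (sphere (0 : E) 1) := {ω | 1 - t < ⟪u, (ω : E)⟫}

theorem isOpen_sphereCap (u : E) (t : ℝ) : IsOpen (sphereCap u t) :=
  isOpen_Ioi.preimage (continuous_const.inner continuous_subtype_val :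
    Continuous fun ω : sphere (0 : E) 1 => ⟪u, (ω : E)⟫)

theorem abs_inner_sphere_le (x : E) (ω : sphere (0 : E) 1) : |⟪x, (ω : E)⟫| ≤ ‖x‖ := by
  simpa using abs_real_inner_le_norm x ω

theorem exists_orthonormalBasis_apply_eq [FiniteDimensional ℝ E] {ι : Type*} [Fintype ι]
    (hcard : finrank ℝ E = Fintype.card ι) {u : E} (hu : ‖u‖ = 1) (i : ι) :
    ∃ b : OrthonormalBasis ι ℝ E, b i = u := by
  have hv : Orthonormal ℝ (({i} : Set ι).domRestrict fun _ => u) :=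
    ⟨fun _ => hu, fun j k hjk => absurd (Subsingleton.elim j k) hjk⟩
  obtain ⟨b, hb⟩ := hv.exists_orthonormalBasis_extension_of_card_eq hcard
  exact ⟨b, hb i rfl⟩

namespace OrthonormalBasis

variable {ι : Type*} [Fintype ι] (b : OrthonormalBasis ι ℝ E)

theorem inner_sq_le_of_mem_sphereCap {i j : ι} (hji : j ≠ i) {t : ℝ}
    {ω : sphere (0 : E) 1} (hω : ω ∈ sphereCap (b i) t) : ⟪b j, (ω : E)⟫ ^ 2 ≤ 2 * t := by
  classical
  have hbessel := b.orthonormal.sum_inner_products_le (ω : E) (s := {i, j})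
  rw [Finset.sum_pair hji.symm, norm_eq_of_mem_sphere, Real.norm_eq_abs, Real.norm_eq_abs,
    sq_abs, sq_abs] at hbessel
  have hle : ⟪b i, (ω : E)⟫ ≤ 1 :=
    (le_abs_self _).trans ((abs_inner_sphere_le _ ω).trans_eq (b.norm_eq_one i))
  have hlt : 1 - t < ⟪b i, (ω : E)⟫ := hω
  nlinarith

theorem Ioo_smul_sphereCap_subset [DecidableEq ι] (i : ι) (t : ℝ) :
    Ioo (0 : ℝ) 1 • ((↑) '' sphereCap (b i) t : Set E) ⊆
      {y | ∀ j, |⟪b j, y⟫| ≤ if j = i then 1 else √(2 * t)} := by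
  rintro _ ⟨r, ⟨hr0, hr1⟩, _, ⟨ω, hω, rfl⟩, rfl⟩ j
  rw [real_inner_smul_right, abs_mul, abs_of_pos hr0]
  refine (mul_le_of_le_one_left (abs_nonneg _) hr1.le).trans ?_
  split_ifs with hji
  · exact hji ▸ (abs_inner_sphere_le _ ω).trans_eq (b.norm_eq_one _)
  · exact abs_le_sqrt (b.inner_sq_le_of_mem_sphereCap hji hω)

theorem volume_setOf_abs_inner_le [MeasurableSpace E] [BorelSpace E] [FiniteDimensional ℝ E]
    (c : ι → ℝ) :
    volume {y : E | ∀ j, |⟪b j, y⟫| ≤ c j} = ∏ j, ENNReal.ofReal (2 * c j) := by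
  have hbox : {y : E | ∀ j, |⟪b j, y⟫| ≤ c j} =
      b.repr ⁻¹' (WithLp.ofLp ⁻¹' univ.pi fun j => Icc (-c j) (c j)) := by
    ext y
    simp [abs_le, Pi.le_def, forall_and, b.repr_apply_apply]
  have hmeas : MeasurableSet (univ.pi fun j => Icc (-c j) (c j)) :=
    .univ_pi fun _ => measurableSet_Icc
  rw [hbox, b.measurePreserving_repr.measure_preimage
      (hmeas.preimage (WithLp.measurable_ofLp _ _)).nullMeasurableSet,
    (PiLp.volume_preserving_ofLp ι).measure_preimage hmeas.nullMeasurableSet, volume_pi_pi]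
  simp_rw [Real.volume_Icc, sub_neg_eq_add, two_mul]

end OrthonormalBasis

theorem exists_mem_sphereCap_exp_inner_le {x : E} (hx : x ≠ 0) (ω : sphere (0 : E) 1) :
    ∃ k : ℕ, ω ∈ sphereCap (‖x‖⁻¹ • x) ((k + 1) / ‖x‖) ∧ exp ⟪x, (ω : E)⟫ ≤ exp (‖x‖ - k) := by
  have hr : 0 < ‖x‖ := norm_pos_iff.2 hx
  have hg : 0 ≤ ‖x‖ - ⟪x, (ω : E)⟫ :=
    sub_nonneg.2 ((le_abs_self _).trans (abs_inner_sphere_le x ω))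
  refine ⟨⌊‖x‖ - ⟪x, (ω : E)⟫⌋₊, ?_, exp_le_exp.2 (by linarith [Nat.floor_le hg])⟩
  have hlt := Nat.lt_floor_add_one (‖x‖ - ⟪x, (ω : E)⟫)
  change 1 - _ < ⟪‖x‖⁻¹ • x, (ω : E)⟫
  rw [real_inner_smul_left, one_sub_div hr.ne', ← div_eq_inv_mul]
  exact div_lt_div_of_pos_right (by linarith) hr

variable [MeasurableSpace E] [BorelSpace E]

theorem lintegral_exp_inner_le_tsum (μ : Measure (sphere (0 : E) 1)) {x : E} (hx : x ≠ 0) :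
    ∫⁻ ω, ENNReal.ofReal (exp ⟪x, (ω : E)⟫) ∂μ ≤
      ∑' k : ℕ, ENNReal.ofReal (exp (‖x‖ - k)) * μ (sphereCap (‖x‖⁻¹ • x) ((k + 1) / ‖x‖)) := by
  set A := fun k : ℕ => sphereCap (‖x‖⁻¹ • x) ((k + 1) / ‖x‖)
  have hA (k : ℕ) : MeasurableSet (A k) := (isOpen_sphereCap _ _).measurableSet
  calc ∫⁻ ω, ENNReal.ofReal (exp ⟪x, (ω : E)⟫) ∂μ
      ≤ ∫⁻ ω, ∑' k : ℕ, (A k).indicator (fun _ => ENNReal.ofReal (exp (‖x‖ - k))) ω ∂μ := by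
        refine lintegral_mono fun ω => ?_
        obtain ⟨k, hk, hle⟩ := exists_mem_sphereCap_exp_inner_le hx ω
        refine le_trans ?_ (ENNReal.le_tsum k)
        rw [indicator_of_mem hk]
        exact ENNReal.ofReal_le_ofReal hle
    _ = _ := by
      rw [lintegral_tsum fun k => (measurable_const.indicator (hA k)).aemeasurable]
      simp_rw [lintegral_indicator_const (hA _)]
      rfl

variable [FiniteDimensional ℝ E]

theorem toSphere_sphereCap_le {u : E} (hu : ‖u‖ = 1) {t : ℝ} (ht : 0 ≤ t) :
    volume.toSphere (sphereCap u t) ≤ ENNReal.ofReal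
      (finrank ℝ E * 2 ^ finrank ℝ E * (2 * t) ^ (((finrank ℝ E : ℝ) - 1) / 2)) := by
  obtain ⟨m, hm⟩ : ∃ m, finrank ℝ E = m + 1 :=
    Nat.exists_eq_add_one_of_ne_zero (finrank_pos_iff_exists_ne_zero.2 ⟨u, by
      rw [← norm_ne_zero_iff, hu]; exact one_ne_zero⟩).ne'
  obtain ⟨b, rfl⟩ := exists_orthonormalBasis_apply_eq (hm.trans (Fintype.card_fin _).symm) hu 0
  have hprod : ∏ j : Fin (m + 1), ENNReal.ofReal (2 * if j = 0 then 1 else √(2 * t)) =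
      ENNReal.ofReal (2 ^ (m + 1) * (2 * t) ^ ((m : ℝ) / 2)) := by
    rw [Fin.prod_univ_succ]
    simp only [if_pos, Fin.succ_ne_zero, if_false, Finset.prod_const, Finset.card_univ,
      Fintype.card_fin, mul_one]
    have hsqrt : √(2 * t) ^ m = (2 * t) ^ ((m : ℝ) / 2) := by
      rw [sqrt_eq_rpow, ← rpow_natCast, ← rpow_mul (by positivity), one_div_mul_eq_div]
    rw [← ENNReal.ofReal_pow (by positivity), ← ENNReal.ofReal_mul (by positivity), mul_pow,
      hsqrt, pow_succ']
    ring_nf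
  rw [Measure.toSphere_apply' _ (isOpen_sphereCap _ t).measurableSet, hm]
  calc ((m + 1 : ℕ) : ℝ≥0∞) * volume (Ioo (0 : ℝ) 1 • ((↑) '' sphereCap (b 0) t : Set E))
      ≤ (m + 1 : ℕ) * volume {y : E | ∀ j, |⟪b j, y⟫| ≤ if j = 0 then 1 else √(2 * t)} := by
        gcongr
        exact b.Ioo_smul_sphereCap_subset 0 t
    _ = _ := by
      rw [b.volume_setOf_abs_inner_le, hprod, ← ENNReal.ofReal_natCast,
        ← ENNReal.ofReal_mul (by positivity)]
      push_cast
      ring_nf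

theorem integrable_exp_inner (μ : Measure (sphere (0 : E) 1)) [IsFiniteMeasure μ] (x : E) :
    Integrable (fun ω : sphere (0 : E) 1 => exp ⟪x, (ω : E)⟫) μ :=
  Continuous.integrable_of_hasCompactSupport
    (continuous_exp.comp (continuous_const.inner continuous_subtype_val))
    (HasCompactSupport.of_compactSpace _)

theorem integral_exp_inner_pos [Nontrivial E] (x : E) :
    0 < ∫ ω, exp ⟪x, (ω : E)⟫ ∂(volume : Measure E).toSphere :=
  have : NeZero (volume : Measure E).toSphere := ⟨Measure.toSphere_ne_zero _⟩
  integral_exp_pos (integrable_exp_inner _ x)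

theorem integral_exp_inner_le (μ : Measure (sphere (0 : E) 1)) [IsFiniteMeasure μ] (x : E) :
    ∫ ω, exp ⟪x, (ω : E)⟫ ∂μ ≤ μ.real univ * exp ‖x‖ := by
  calc ∫ ω, exp ⟪x, (ω : E)⟫ ∂μ ≤ ∫ _, exp ‖x‖ ∂μ :=
        integral_mono (integrable_exp_inner μ x) (integrable_const _)
          fun ω => exp_le_exp.2 ((le_abs_self _).trans (abs_inner_sphere_le x ω))
    _ = μ.real univ * exp ‖x‖ := by rw [integral_const, smul_eq_mul]

theorem integral_exp_inner_le_of_norm_le_one (μ : Measure (sphere (0 : E) 1)) [IsFiniteMeasure μ]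
    {q : ℝ} (hq : q ≤ 0) :
    ∃ C, ∀ x : E, ‖x‖ ≤ 1 → ∫ ω, exp ⟪x, (ω : E)⟫ ∂μ ≤ C * exp ‖x‖ * (1 + ‖x‖) ^ q := by
  refine ⟨μ.real univ * 2 ^ (-q), fun x hx => (integral_exp_inner_le μ x).trans ?_⟩
  have h2 : 1 ≤ 2 ^ (-q) * (1 + ‖x‖) ^ q := by
    calc (1 : ℝ) = 2 ^ (-q) * 2 ^ q := by rw [← rpow_add two_pos, neg_add_cancel, rpow_zero]
      _ ≤ 2 ^ (-q) * (1 + ‖x‖) ^ q := by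
        have : (2 : ℝ) ^ q ≤ (1 + ‖x‖) ^ q :=
          rpow_le_rpow_of_nonpos (by positivity) (by linarith) hq
        gcongr
  calc μ.real univ * exp ‖x‖ = μ.real univ * exp ‖x‖ * 1 := (mul_one _).symm
    _ ≤ μ.real univ * exp ‖x‖ * (2 ^ (-q) * (1 + ‖x‖) ^ q) := by gcongr
    _ = _ := by ring

theorem integral_exp_inner_le_of_one_le_norm :
    ∃ C, ∀ x : E, 1 ≤ ‖x‖ → ∫ ω, exp ⟪x, (ω : E)⟫ ∂(volume : Measure E).toSphere ≤
      C * exp ‖x‖ * (1 + ‖x‖) ^ (-((finrank ℝ E : ℝ) - 1) / 2) := by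
  set d := finrank ℝ E
  set p : ℝ := ((d : ℝ) - 1) / 2 with hp_def
  set S := ∑' k : ℕ, ((k : ℝ) + 1) ^ d * exp (-k)
  refine ⟨d * 2 ^ d * 4 ^ p * S, fun x hx => ?_⟩
  set r := ‖x‖
  have hr : 0 < r := by linarith
  have hd : 1 ≤ d := finrank_pos_iff_exists_ne_zero.2 ⟨x, norm_pos_iff.1 hr⟩
  have hp : 0 ≤ p := div_nonneg (sub_nonneg.2 (by exact_mod_cast hd)) two_pos.le
  have hu : ‖r⁻¹ • x‖ = 1 := by rw [norm_smul, norm_inv, norm_norm, inv_mul_cancel₀ hr.ne']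
  have hterm (k : ℕ) : ENNReal.ofReal (exp (r - k)) *
      (volume : Measure E).toSphere (sphereCap (r⁻¹ • x) ((k + 1) / r)) ≤ ENNReal.ofReal
        (d * 2 ^ d * (4 ^ p * exp r * (1 + r) ^ (-p) * (((k : ℝ) + 1) ^ d * exp (-k)))) := by
    calc _ ≤ ENNReal.ofReal (exp (r - k)) *
          ENNReal.ofReal (d * 2 ^ d * (2 * ((k + 1) / r)) ^ p) := by
          gcongr
          exact toSphere_sphereCap_le hu (by positivity)
      _ = ENNReal.ofReal (d * 2 ^ d * (exp (r - k) * (2 * ((k + 1) / r)) ^ p)) := by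
          rw [← ENNReal.ofReal_mul (exp_pos _).le, mul_left_comm]
      _ ≤ _ := ENNReal.ofReal_le_ofReal <| mul_le_mul_of_nonneg_left
          (exp_sub_mul_rpow_le hx hp (by rw [hp_def]; linarith) k) (by positivity)
  rw [integral_eq_lintegral_of_nonneg_ae (.of_forall fun _ => (exp_pos _).le)
    (integrable_exp_inner _ x).aestronglyMeasurable]
  refine ENNReal.toReal_le_of_le_ofReal (by positivity) ?_
  calc ∫⁻ ω, ENNReal.ofReal (exp ⟪x, (ω : E)⟫) ∂(volume : Measure E).toSphere
      ≤ ∑' k : ℕ, ENNReal.ofReal (exp (r - k)) *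
          (volume : Measure E).toSphere (sphereCap (r⁻¹ • x) ((k + 1) / r)) :=
        lintegral_exp_inner_le_tsum _ (norm_pos_iff.1 hr)
    _ ≤ ∑' k : ℕ, ENNReal.ofReal
          (d * 2 ^ d * (4 ^ p * exp r * (1 + r) ^ (-p) * (((k : ℝ) + 1) ^ d * exp (-k)))) :=
        ENNReal.tsum_le_tsum hterm
    _ = ENNReal.ofReal (d * 2 ^ d * 4 ^ p * S * exp r * (1 + r) ^ (-((d : ℝ) - 1) / 2)) := by
        rw [← ENNReal.ofReal_tsum_of_nonneg (fun k => by positivity)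
          (((summable_add_one_pow_mul_exp_neg d).mul_left _).mul_left _), tsum_mul_left,
          tsum_mul_left, neg_div, ← hp_def]
        congr 1
        ring

end

theorem stmt_7 (n : ℕ) (hn : 2 ≤ n) :
    ∃ C > (0:ℝ), ∀ x : EuclideanSpace ℝ (Fin n),
      0 < phi1 n x ∧
      phi1 n x ≤ C * Real.exp ‖x‖ * (1 + ‖x‖) ^ (-((n:ℝ) - 1) / 2) := by
  have : Nontrivial (EuclideanSpace ℝ (Fin n)) :=
    finrank_pos_iff.1 (by rw [finrank_euclideanSpace_fin]; omega)
  have hq : -((n : ℝ) - 1) / 2 ≤ 0 := by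
    have : (2 : ℝ) ≤ n := by exact_mod_cast hn
    linarith
  obtain ⟨C₁, hsmall⟩ := integral_exp_inner_le_of_norm_le_one
    (volume : Measure (EuclideanSpace ℝ (Fin n))).toSphere hq
  obtain ⟨C₂, hlarge⟩ := integral_exp_inner_le_of_one_le_norm (E := EuclideanSpace ℝ (Fin n))
  rw [finrank_euclideanSpace_fin] at hlarge
  refine ⟨max (max C₁ C₂) 1, by positivity, fun x => ⟨integral_exp_inner_pos x, ?_⟩⟩
  rcases le_total ‖x‖ 1 with hx | hx
  · refine (hsmall x hx).trans ?_
    gcongr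
    exact (le_max_left _ _).trans (le_max_left _ _)
  · refine (hlarge x hx).trans ?_
    gcongr
    exact (le_max_right _ _).trans (le_max_left _ _)
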